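/- arXiv:1409.1949 — 4 statements merged into one kernel-verified Lean document; each statement's English description precedes it below -/
import Mathlib

section
/- Let X be a finite-dimensional vector space over an ordered field K of characteristic 0 with a nondegenerate symmetric bilinear form ψ and dim X = r > 0. Then for every n ≥ 2 the Laplace operator Δ^n : Sym^n X → Sym^{n-2} X (symmetrized contraction with ψ) is surjective; in fact it admits a section s with Δ^n ∘ s = id. -/
open MvPolynomial

/-- The (normalized) Laplace operator `Δ^m` of the symmetric bilinear form with matrix `M`,
as a linear operator on polynomials: `(1/(m(m-1))) ∑_{i,j} M i j ∂_i ∂_j`.  On homogeneous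
polynomials of degree `m` (the model for `Sym^m X`) this is the symmetrized contraction
with the form. -/
noncomputable def lapPolyL {ι K : Type*} [Fintype ι] [Field K]
    (M : Matrix ι ι K) (m : ℕ) : MvPolynomial ι K →ₗ[K] MvPolynomial ι K :=
  ((m : K) * ((m : K) - 1))⁻¹ •
    ∑ i, ∑ j, M i j • ((pderiv i).toLinearMap ∘ₗ (pderiv j).toLinearMap)

section LapAuxSection

open MvPolynomial Finset

namespace LapAux

set_option linter.unusedSectionVars false

variable {ι K : Type*} [Fintype ι] [DecidableEq ι] [Field K] [LinearOrder K] [IsStrictOrderedRing K]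

lemma degree_eq_sum_univ (d : ι →₀ ℕ) : d.degree = ∑ i, d i :=
  Finset.sum_subset (Finset.subset_univ _) (by
    intro i _ h
    simpa using Finsupp.notMem_support_iff.mp h)

lemma degree_sub_single {d : ι →₀ ℕ} {i : ι} (hi : d i ≠ 0) :
    Finsupp.degree ((d - Finsupp.single i 1 : ι →₀ ℕ)) + 1 = d.degree := by
  have h : ∀ j, ((d - Finsupp.single i 1 : ι →₀ ℕ)) j = d j - (if j = i then 1 else 0) := by
    intro j
    rw [Finsupp.tsub_apply, Finsupp.single_apply]
    simp [eq_comm]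
  rw [degree_eq_sum_univ, degree_eq_sum_univ,
    ← Finset.add_sum_erase _ d (Finset.mem_univ i),
    ← Finset.add_sum_erase _ _ (Finset.mem_univ i)]
  have h2 : ∀ j ∈ Finset.univ.erase i, ((d - Finsupp.single i 1 : ι →₀ ℕ)) j = d j := by
    intro j hj
    rw [h j, if_neg (Finset.mem_erase.mp hj).1]
    omega
  rw [Finset.sum_congr rfl h2, h i, if_pos rfl]
  have h3 : ∑ x ∈ Finset.univ.erase i, d x = (Finset.univ.erase i).sum ⇑d := rfl
  omega

lemma coeff_degree {P : MvPolynomial ι K} {e : ℕ} (hP : P.IsHomogeneous e)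
    {d : ι →₀ ℕ} (hd : d ∈ P.support) : d.degree = e := by
  by_contra h
  exact (mem_support_iff.mp hd) (hP.coeff_eq_zero h)

lemma pderiv_isHomogeneous {P : MvPolynomial ι K} {e : ℕ} (hP : P.IsHomogeneous e) (i : ι) :
    (pderiv i P).IsHomogeneous (e - 1) := by
  conv_lhs => rw [P.as_sum]
  rw [map_sum]
  apply IsHomogeneous.sum
  intro d hd
  rw [pderiv_monomial]
  by_cases h : d i = 0
  · simp only [h, Nat.cast_zero, mul_zero, map_zero]
    exact isHomogeneous_zero _ _ _
  · apply isHomogeneous_monomial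
    have h1 := degree_sub_single (d := d) (i := i) h
    have h2 := coeff_degree hP hd
    omega

lemma euler {P : MvPolynomial ι K} {e : ℕ} (hP : P.IsHomogeneous e) :
    ∑ i, X i * pderiv i P = (e : K) • P := by
  have key : ∀ d ∈ P.support, ∀ i : ι,
      X i * pderiv i (monomial d (coeff d P)) = monomial d (coeff d P * d i) := by
    intro d _ i
    rw [pderiv_monomial, X, monomial_mul, one_mul]
    by_cases h : d i = 0
    · rw [h]; simp
    · have hd2 : Finsupp.single i 1 + (d - Finsupp.single i 1) = d := by
        ext j
        simp only [Finsupp.add_apply, Finsupp.tsub_apply, Finsupp.single_apply]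
        by_cases hj : i = j
        · subst hj; simp; omega
        · simp [hj]
      rw [hd2]
  have hL : ∀ i : ι, X i * pderiv i P = ∑ d ∈ P.support, monomial d (coeff d P * d i) := by
    intro i
    conv_lhs => rw [P.as_sum]
    rw [map_sum, Finset.mul_sum]
    exact Finset.sum_congr rfl fun d hd => key d hd i
  rw [Finset.sum_congr rfl fun i _ => hL i, Finset.sum_comm]
  conv_rhs => rw [P.as_sum, Finset.smul_sum]
  refine Finset.sum_congr rfl fun d hd => ?_
  rw [← map_sum, smul_monomial]
  congr 1
  rw [← Finset.mul_sum, smul_eq_mul]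
  have : (∑ i, ((d i : K))) = (e : K) := by
    rw [← Nat.cast_sum, ← degree_eq_sum_univ, coeff_degree hP hd]
  rw [this, mul_comm]


/-- The raw (unnormalized) Laplace operator. -/
noncomputable def lapD (M : Matrix ι ι K) : MvPolynomial ι K →ₗ[K] MvPolynomial ι K :=
  ∑ i, ∑ j, M i j • ((pderiv i).toLinearMap ∘ₗ (pderiv j).toLinearMap)

lemma lapD_apply (M : Matrix ι ι K) (P : MvPolynomial ι K) :
    lapD M P = ∑ i, ∑ j, M i j • pderiv i (pderiv j P) := by
  simp [lapD, LinearMap.sum_apply, LinearMap.smul_apply]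

lemma lapD_isHomogeneous (M : Matrix ι ι K) {P : MvPolynomial ι K} {e : ℕ}
    (hP : P.IsHomogeneous e) : (lapD M P).IsHomogeneous (e - 2) := by
  rw [lapD_apply]
  apply IsHomogeneous.sum
  intro i _
  apply IsHomogeneous.sum
  intro j _
  rw [smul_eq_C_mul]
  have : ((pderiv i) ((pderiv j) P)).IsHomogeneous (e - 1 - 1) :=
    pderiv_isHomogeneous (pderiv_isHomogeneous hP j) i
  have h2 : e - 1 - 1 = e - 2 := by omega
  rw [h2] at this
  exact this.C_mul _

lemma pderiv_eq_zero_of_isHomogeneous_zero {P : MvPolynomial ι K}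
    (hP : P.IsHomogeneous 0) (i : ι) : pderiv i P = 0 := by
  conv_lhs => rw [P.as_sum]
  rw [map_sum]
  apply Finset.sum_eq_zero
  intro d hd
  have h0 : d = 0 := (Finsupp.degree_eq_zero_iff d).mp (coeff_degree hP hd)
  subst h0
  simp

lemma lapD_eq_zero_of_le_one (M : Matrix ι ι K) {P : MvPolynomial ι K} {e : ℕ}
    (hP : P.IsHomogeneous e) (he : e ≤ 1) : lapD M P = 0 := by
  rw [lapD_apply]
  apply Finset.sum_eq_zero
  intro i _
  apply Finset.sum_eq_zero
  intro j _
  interval_cases e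
  · rw [pderiv_eq_zero_of_isHomogeneous_zero hP j, map_zero, smul_zero]
  · rw [pderiv_eq_zero_of_isHomogeneous_zero (pderiv_isHomogeneous hP j) i, smul_zero]



noncomputable def qq (N : Matrix ι ι K) : MvPolynomial ι K :=
  ∑ k, ∑ l, N k l • (X k * X l)

lemma qq_isHomogeneous (N : Matrix ι ι K) : (qq N).IsHomogeneous 2 := by
  apply IsHomogeneous.sum
  intro k _
  apply IsHomogeneous.sum
  intro l _
  rw [smul_eq_C_mul]
  exact (((isHomogeneous_X K k).mul (isHomogeneous_X K l)).C_mul _)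

lemma pderiv_qq (N : Matrix ι ι K) (hN : N.IsSymm) (j : ι) :
    pderiv j (qq N) = ∑ l, (2 * N j l) • X l := by
  unfold qq
  simp only [map_sum, Derivation.map_smul, pderiv_mul, pderiv_X, Pi.single_apply, smul_add,
    mul_ite, ite_mul, one_mul, mul_one, zero_mul, mul_zero, smul_ite, smul_zero,
    Finset.sum_add_distrib, Finset.sum_ite_eq, Finset.sum_ite_eq', Finset.mem_univ, if_true]
  have h1 : (∑ k : ι, ∑ l : ι, if k = j then N k l • (X l : MvPolynomial ι K) else 0)
      = ∑ l, N j l • X l := by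
    rw [Finset.sum_eq_single j]
    · simp
    · intro b _ hb; simp [hb]
    · simp
  rw [h1, ← Finset.sum_add_distrib]
  refine Finset.sum_congr rfl fun l _ => ?_
  rw [hN.apply l j, two_mul, add_smul]

lemma pderiv_pderiv_qq (N : Matrix ι ι K) (hN : N.IsSymm) (i j : ι) :
    pderiv i (pderiv j (qq N)) = C (2 * N j i) := by
  rw [pderiv_qq N hN, map_sum]
  simp only [Derivation.map_smul, pderiv_X, Pi.single_apply, smul_ite, smul_zero,
    Finset.sum_ite_eq', Finset.mem_univ, if_true]
  rw [smul_eq_C_mul, mul_one]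

lemma sum_M_pderiv_qq (M N : Matrix ι ι K) (hMN : M * N = 1) (hN : N.IsSymm) (i : ι) :
    ∑ j, M i j • pderiv j (qq N) = (2 : K) • X i := by
  simp only [pderiv_qq N hN, Finset.smul_sum, smul_smul]
  rw [Finset.sum_comm]
  have h1 : ∀ l, ∑ j, (M i j * (2 * N j l)) • (X l : MvPolynomial ι K)
      = (2 * (1 : Matrix ι ι K) i l) • X l := by
    intro l
    rw [← Finset.sum_smul, ← hMN, Matrix.mul_apply, Finset.mul_sum]
    congr 1
    exact Finset.sum_congr rfl fun j _ => by ring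
  rw [Finset.sum_congr rfl fun l _ => h1 l]
  simp [Matrix.one_apply, mul_ite, smul_ite]

lemma lapD_qq_mul (M N : Matrix ι ι K) (hM : M.IsSymm) (hN : N.IsSymm) (hMN : M * N = 1)
    {S : MvPolynomial ι K} {e : ℕ} (hS : S.IsHomogeneous e) :
    lapD M (qq N * S) = (2 * (Fintype.card ι : K) + 4 * (e : K)) • S + qq N * lapD M S := by
  rw [lapD_apply]
  have expand : ∀ i j : ι, M i j • pderiv i (pderiv j (qq N * S)) =
      M i j • (pderiv i (pderiv j (qq N)) * S) + M i j • (pderiv j (qq N) * pderiv i S)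
      + M i j • (pderiv i (qq N) * pderiv j S) + M i j • (qq N * pderiv i (pderiv j S)) := by
    intro i j
    rw [pderiv_mul, map_add, pderiv_mul, pderiv_mul, ← smul_add, ← smul_add, ← smul_add]
    congr 1
    ring
  simp only [expand, Finset.sum_add_distrib]
  have hA : ∑ i, ∑ j, M i j • (pderiv i (pderiv j (qq N)) * S)
      = (2 * (Fintype.card ι : K)) • S := by
    have h1 : ∀ i j : ι, M i j • (pderiv i (pderiv j (qq N)) * S)
        = (M i j * (2 * N j i)) • S := by
      intro i j
      rw [pderiv_pderiv_qq N hN, smul_eq_C_mul, smul_eq_C_mul, ← mul_assoc, ← C_mul]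
    simp only [h1, ← Finset.sum_smul]
    congr 1
    have h2 : ∀ i, ∑ j, M i j * (2 * N j i) = 2 := by
      intro i
      have : ∑ j, M i j * (2 * N j i) = 2 * ((M * N) i i) := by
        rw [Matrix.mul_apply, Finset.mul_sum]
        exact Finset.sum_congr rfl fun j _ => by ring
      rw [this, hMN, Matrix.one_apply_eq, mul_one]
    rw [Finset.sum_congr rfl fun i _ => h2 i]
    simp [mul_comm]
  have hB : ∑ i, ∑ j, M i j • (pderiv j (qq N) * pderiv i S) = (2 * (e : K)) • S := by
    have h1 : ∀ i, ∑ j, M i j • (pderiv j (qq N) * pderiv i S)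
        = (2 : K) • (X i * pderiv i S) := by
      intro i
      have : ∀ j, M i j • (pderiv j (qq N) * pderiv i S)
          = (M i j • pderiv j (qq N)) * pderiv i S := fun j => (smul_mul_assoc _ _ _).symm
      rw [Finset.sum_congr rfl fun j _ => this j, ← Finset.sum_mul,
        sum_M_pderiv_qq M N hMN hN, smul_mul_assoc]
    rw [Finset.sum_congr rfl fun i _ => h1 i, ← Finset.smul_sum, euler hS, smul_smul]
  have hB' : ∑ i, ∑ j, M i j • (pderiv i (qq N) * pderiv j S) = (2 * (e : K)) • S := by
    rw [Finset.sum_comm]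
    have h1 : ∀ j, ∑ i, M i j • (pderiv i (qq N) * pderiv j S)
        = (2 : K) • (X j * pderiv j S) := by
      intro j
      have : ∀ i, M i j • (pderiv i (qq N) * pderiv j S)
          = (M j i • pderiv i (qq N)) * pderiv j S := by
        intro i
        rw [hM.apply j i, smul_mul_assoc]
      rw [Finset.sum_congr rfl fun i _ => this i, ← Finset.sum_mul,
        sum_M_pderiv_qq M N hMN hN, smul_mul_assoc]
    rw [Finset.sum_congr rfl fun j _ => h1 j, ← Finset.smul_sum, euler hS, smul_smul]
  have hD : ∑ i, ∑ j, M i j • (qq N * pderiv i (pderiv j S)) = qq N * lapD M S := by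
    rw [lapD_apply, Finset.mul_sum]
    refine Finset.sum_congr rfl fun i _ => ?_
    rw [Finset.mul_sum]
    exact Finset.sum_congr rfl fun j _ => (mul_smul_comm _ _ _).symm
  rw [hA, hB, hB', hD, ← add_smul, ← add_smul]
  congr 2
  ring

lemma lapD_inj_aux (M N : Matrix ι ι K)
    (hM : M.IsSymm) (hN : N.IsSymm) (hMN : M * N = 1) :
    ∀ e : ℕ, ∀ γ : K, 0 < γ → ∀ S : MvPolynomial ι K,
      S.IsHomogeneous e → γ • S + qq N * lapD M S = 0 → S = 0 := by
  intro e
  induction e using Nat.strong_induction_on with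
  | _ e IH =>
    intro γ hγ S hS h
    by_cases he : e ≤ 1
    · rw [lapD_eq_zero_of_le_one M hS he, mul_zero, add_zero] at h
      rcases smul_eq_zero.mp h with h' | h'
      · exact absurd h' (ne_of_gt hγ)
      · exact h'
    · push_neg at he
      have hT : (lapD M S).IsHomogeneous (e - 2) := lapD_isHomogeneous M hS
      have h2 := congrArg (lapD M) h
      rw [map_zero, map_add, map_smul, lapD_qq_mul M N hM hN hMN hT] at h2
      have h3 : (γ + (2 * (Fintype.card ι : K) + 4 * ((e - 2 : ℕ) : K))) • lapD M S
          + qq N * lapD M (lapD M S) = 0 := by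
        rw [add_smul, add_assoc]
        exact h2
      have hpos : 0 < γ + (2 * (Fintype.card ι : K) + 4 * ((e - 2 : ℕ) : K)) := by
        have h4 : (0:K) ≤ (Fintype.card ι : K) := Nat.cast_nonneg _
        have h5 : (0:K) ≤ ((e - 2 : ℕ) : K) := Nat.cast_nonneg _
        linarith
      have hT0 : lapD M S = 0 := IH (e - 2) (by omega) _ hpos _ hT h3
      rw [hT0, mul_zero, add_zero] at h
      rcases smul_eq_zero.mp h with h' | h'
      · exact absurd h' (ne_of_gt hγ)
      · exact h'

end LapAux

end LapAuxSection

/-- Over an ordered field `K`, for a nondegenerate symmetric bilinear form `ψ` (matrix `M`)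
on a space of dimension `r > 0`, the Laplace operator `Δ^n : Sym^n X → Sym^{n-2} X` is
surjective for every `n ≥ 2`, and in fact admits a linear section `s` with `Δ^n ∘ s = id`
(on homogeneous polynomials, the model for symmetric powers). -/
theorem laplace_surjective_symmetric
    {ι K : Type*} [Fintype ι] [DecidableEq ι] [Field K] [LinearOrder K] [IsStrictOrderedRing K]
    (M : Matrix ι ι K) (hsymm : M.IsSymm) (hnd : IsUnit M.det)
    (hr : 0 < Fintype.card ι)
    (n : ℕ) (hn : 2 ≤ n) :
    (∀ Q ∈ homogeneousSubmodule ι K (n - 2),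
      ∃ P ∈ homogeneousSubmodule ι K n, lapPolyL M n P = Q) ∧
    (∃ s : MvPolynomial ι K →ₗ[K] MvPolynomial ι K,
      ∀ Q ∈ homogeneousSubmodule ι K (n - 2),
        s Q ∈ homogeneousSubmodule ι K n ∧ lapPolyL M n (s Q) = Q) := by
  classical
  set N := M⁻¹ with hNdef
  have hMN : M * N = 1 := Matrix.mul_nonsing_inv M hnd
  have hNsym : N.IsSymm := by
    show Matrix.transpose N = N
    rw [hNdef, Matrix.transpose_nonsing_inv]
    exact congrArg Inv.inv hsymm
  -- the normalization constant
  have h2K : (2 : K) ≤ (n : K) := by exact_mod_cast hn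
  have hbase : (0 : K) < (n : K) * ((n : K) - 1) := by
    apply mul_pos <;> linarith
  have hαne : ((n : K) * ((n : K) - 1))⁻¹ ≠ 0 := inv_ne_zero (ne_of_gt hbase)
  have hlap : ∀ P : MvPolynomial ι K,
      lapPolyL M n P = ((n : K) * ((n : K) - 1))⁻¹ • LapAux.lapD M P := fun P => rfl
  set V := homogeneousSubmodule ι K (n - 2) with hVdef
  haveI : FiniteDimensional K V := by
    apply Submodule.finiteDimensional_of_le (S₂ := restrictTotalDegree ι K (n - 2))
    intro p hp
    rw [mem_restrictTotalDegree]
    exact ((mem_homogeneousSubmodule _ _).mp hp).totalDegree_le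
  -- the operator Δ ∘ (mult by q) as an endomorphism of V
  have hLmem : ∀ S : V, lapPolyL M n (LapAux.qq N * (S : MvPolynomial ι K)) ∈ V := by
    intro S
    rw [hlap]
    rw [mem_homogeneousSubmodule]
    have hq : (LapAux.qq N * (S : MvPolynomial ι K)).IsHomogeneous (2 + (n - 2)) :=
      (LapAux.qq_isHomogeneous N).mul ((mem_homogeneousSubmodule _ _).mp S.2)
    have := LapAux.lapD_isHomogeneous M hq
    have h22 : 2 + (n - 2) - 2 = n - 2 := by omega
    rw [h22] at this
    rw [smul_eq_C_mul]
    exact this.C_mul _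
  let Φ : V →ₗ[K] V :=
    LinearMap.codRestrict V
      ((lapPolyL M n) ∘ₗ (LinearMap.mulLeft K (LapAux.qq N)) ∘ₗ V.subtype) hLmem
  have hΦapp : ∀ S : V, (Φ S : MvPolynomial ι K)
      = lapPolyL M n (LapAux.qq N * (S : MvPolynomial ι K)) := fun S => rfl
  have hγpos : (0 : K) < 2 * (Fintype.card ι : K) + 4 * ((n - 2 : ℕ) : K) := by
    have h4 : (1 : K) ≤ (Fintype.card ι : K) := by exact_mod_cast hr
    have h5 : (0 : K) ≤ ((n - 2 : ℕ) : K) := Nat.cast_nonneg _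
    linarith
  have hker : ∀ S : V, Φ S = 0 → S = 0 := by
    rintro S hS
    have h0 : lapPolyL M n (LapAux.qq N * (S : MvPolynomial ι K)) = 0 := by
      rw [← hΦapp]
      exact congrArg Subtype.val hS
    rw [hlap] at h0
    have h1 : LapAux.lapD M (LapAux.qq N * (S : MvPolynomial ι K)) = 0 := by
      rcases smul_eq_zero.mp h0 with h' | h'
      · exact absurd h' hαne
      · exact h'
    rw [LapAux.lapD_qq_mul M N hsymm hNsym hMN
      ((mem_homogeneousSubmodule _ _).mp S.2)] at h1
    have hS0 : (S : MvPolynomial ι K) = 0 :=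
      LapAux.lapD_inj_aux M N hsymm hNsym hMN (n - 2) _ hγpos _
        ((mem_homogeneousSubmodule _ _).mp S.2) h1
    exact Subtype.ext hS0
  have hΦinj : Function.Injective Φ := by
    apply LinearMap.ker_eq_bot (M := V) (M₂ := V) (f := Φ) |>.mp
    rw [Submodule.eq_bot_iff]
    intro S hS
    exact hker S (LinearMap.mem_ker.mp hS)
  let Φe : V ≃ₗ[K] V := LinearEquiv.ofInjectiveEndo Φ hΦinj
  obtain ⟨W, hW⟩ := Submodule.exists_isCompl V
  let π : MvPolynomial ι K →ₗ[K] V := V.linearProjOfIsCompl W hW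
  let s : MvPolynomial ι K →ₗ[K] MvPolynomial ι K :=
    (LinearMap.mulLeft K (LapAux.qq N)) ∘ₗ V.subtype ∘ₗ
      (Φe.symm : V ≃ₗ[K] V).toLinearMap ∘ₗ π
  have hsec : ∀ Q ∈ homogeneousSubmodule ι K (n - 2),
      s Q ∈ homogeneousSubmodule ι K n ∧ lapPolyL M n (s Q) = Q := by
    intro Q hQ
    have hπ : π Q = ⟨Q, hQ⟩ := Submodule.linearProjOfIsCompl_apply_left hW ⟨Q, hQ⟩
    have hs : s Q = LapAux.qq N * ((Φe.symm ⟨Q, hQ⟩ : V) : MvPolynomial ι K) := by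
      simp only [s, LinearMap.comp_apply, hπ]
      rfl
    have hΦ : Φ (Φe.symm ⟨Q, hQ⟩) = ⟨Q, hQ⟩ := Φe.apply_symm_apply ⟨Q, hQ⟩
    constructor
    · rw [hs, mem_homogeneousSubmodule]
      have hmul := (LapAux.qq_isHomogeneous N).mul
        ((mem_homogeneousSubmodule _ _).mp (Φe.symm ⟨Q, hQ⟩).2)
      have h22 : 2 + (n - 2) = n := by omega
      rwa [h22] at hmul
    · rw [hs]
      calc lapPolyL M n (LapAux.qq N * ((Φe.symm ⟨Q, hQ⟩ : V) : MvPolynomial ι K))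
          = ((Φ (Φe.symm ⟨Q, hQ⟩) : V) : MvPolynomial ι K) := (hΦapp _).symm
        _ = Q := by rw [hΦ]
  exact ⟨fun Q hQ => ⟨s Q, (hsec Q hQ).1, (hsec Q hQ).2⟩, s, hsec⟩
end

section
/- Let B be a quaternion algebra over ℚ with main involution ι and reduced trace Tr, and let B₀ = ker(Tr). The symmetric square ∨²B (the fixed subspace of B ⊗ B under the swap, equivalently the span of elements b ⊗ b) is a ℚ-subalgebra of B ⊗ B, and the map χ : ∨²B → ℚ determined by χ(b₁ ∨ b₂) = Tr(b₁^ι b₂)/2 is a ℚ-algebra homomorphism. -/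
open scoped Quaternion TensorProduct

/-- The symmetric square `∨²B ⊆ B ⊗ B`: the `ℚ`-span of the elements `b ⊗ b`
(equivalently, the span of the symmetrized tensors `b₁ ∨ b₂`). -/
noncomputable def symSq (c₁ c₂ : ℚ) : Submodule ℚ (ℍ[ℚ,c₁,c₂] ⊗[ℚ] ℍ[ℚ,c₁,c₂]) :=
  Submodule.span ℚ {x | ∃ b : ℍ[ℚ,c₁,c₂], x = b ⊗ₜ[ℚ] b}

private theorem nr_mul (c₁ c₂ : ℚ) (x y : ℍ[ℚ,c₁,c₂]) :
    (x * y * star (x * y)).re = (x * star x).re * (y * star y).re := by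
  have : x * y * star (x * y) = ((x * star x).re * (y * star y).re : ℚ) := by
    rw [StarMul.star_mul, mul_assoc, ← mul_assoc y, y.mul_star_eq_coe,
      QuaternionAlgebra.coe_commutes, ← mul_assoc, x.mul_star_eq_coe,
      ← QuaternionAlgebra.coe_mul]
    simp [QuaternionAlgebra.re_coe]
  rw [this, QuaternionAlgebra.re_coe]

private theorem star_mul_self_re (c₁ c₂ : ℚ) (x : ℍ[ℚ,c₁,c₂]) :
    (star x * x).re = (x * star x).re := by
  rw [← star_comm_self']

/-- Let `B = ℍ[ℚ,c₁,c₂]` (with `c₁ c₂ ≠ 0`) be a quaternion algebra over `ℚ`.  The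
symmetric square `∨²B` is a `ℚ`-subalgebra of `B ⊗ B` (it contains `1` and is closed under
multiplication), and the linear functional `χ` determined by
`χ(b₁ ∨ b₂) = Tr(b₁^ι b₂)/2 = (star b₁ * b₂).re` restricts to an algebra homomorphism on
`∨²B` (in particular `χ(b ⊗ b) = Nr(b)`). -/
theorem symSq_subalgebra_and_chi_algHom (c₁ c₂ : ℚ) (h₁ : c₁ ≠ 0) (h₂ : c₂ ≠ 0)
    (χ : (ℍ[ℚ,c₁,c₂] ⊗[ℚ] ℍ[ℚ,c₁,c₂]) →ₗ[ℚ] ℚ)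
    (hχ : ∀ b₁ b₂ : ℍ[ℚ,c₁,c₂], χ (b₁ ⊗ₜ[ℚ] b₂) = (star b₁ * b₂).re) :
    (1 : ℍ[ℚ,c₁,c₂] ⊗[ℚ] ℍ[ℚ,c₁,c₂]) ∈ symSq c₁ c₂ ∧
    (∀ x ∈ symSq c₁ c₂, ∀ y ∈ symSq c₁ c₂, x * y ∈ symSq c₁ c₂) ∧
    χ 1 = 1 ∧
    (∀ x ∈ symSq c₁ c₂, ∀ y ∈ symSq c₁ c₂, χ (x * y) = χ x * χ y) := by
  have hone : (1 : ℍ[ℚ,c₁,c₂] ⊗[ℚ] ℍ[ℚ,c₁,c₂]) = (1 : ℍ[ℚ,c₁,c₂]) ⊗ₜ[ℚ] 1 := rfl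
  refine ⟨?_, ?_, ?_, ?_⟩
  · exact Submodule.subset_span ⟨1, hone⟩
  · intro x hx y hy
    induction hx using Submodule.span_induction with
    | mem x hx =>
      obtain ⟨a, rfl⟩ := hx
      induction hy using Submodule.span_induction with
      | mem y hy =>
        obtain ⟨b, rfl⟩ := hy
        rw [Algebra.TensorProduct.tmul_mul_tmul]
        exact Submodule.subset_span ⟨a * b, rfl⟩
      | zero => rw [mul_zero]; exact zero_mem _
      | add y z _ _ hy hz => rw [mul_add]; exact add_mem hy hz
      | smul r y _ hy => rw [mul_smul_comm]; exact Submodule.smul_mem _ _ hy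
    | zero => rw [zero_mul]; exact zero_mem _
    | add x z _ _ hx hz => rw [add_mul]; exact add_mem hx hz
    | smul r x _ hx => rw [smul_mul_assoc]; exact Submodule.smul_mem _ _ hx
  · rw [hone, hχ]; simp
  · intro x hx y hy
    induction hx using Submodule.span_induction with
    | mem x hx =>
      obtain ⟨a, rfl⟩ := hx
      induction hy using Submodule.span_induction with
      | mem y hy =>
        obtain ⟨b, rfl⟩ := hy
        rw [Algebra.TensorProduct.tmul_mul_tmul, hχ, hχ, hχ,
          star_mul_self_re, star_mul_self_re, star_mul_self_re, nr_mul]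
      | zero => rw [mul_zero, map_zero, mul_zero]
      | add y z _ _ hy hz => rw [mul_add, map_add, map_add, hy, hz, mul_add]
      | smul r y _ hy => rw [mul_smul_comm, map_smul, map_smul, hy, smul_eq_mul,
          smul_eq_mul, mul_left_comm]
    | zero => rw [zero_mul, map_zero, zero_mul]
    | add x z _ _ hx hz => rw [add_mul, map_add, map_add, hx, hz, add_mul]
    | smul r x _ hx => rw [smul_mul_assoc, map_smul, map_smul, hx, smul_eq_mul,
        smul_eq_mul, mul_assoc]
end

section
/- Let B be a quaternion algebra over ℚ. There exists a unique idempotent e₋ ∈ ∨²B such that s · e₋ = χ(s) · e₋ for all s ∈ ∨²B, where χ : ∨²B → ℚ is the algebra homomorphism with χ(b ⊗ b) = Nr(b). -/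
open scoped Quaternion TensorProduct

namespace EMinusAux

noncomputable section
variable (c₁ c₂ : ℚ)

def qI : ℍ[ℚ,c₁,c₂] := ⟨0,1,0,0⟩
def qJ : ℍ[ℚ,c₁,c₂] := ⟨0,0,1,0⟩
def qK : ℍ[ℚ,c₁,c₂] := ⟨0,0,0,1⟩

lemma mk_decomp (x y z w : ℚ) :
    (⟨x,y,z,w⟩ : ℍ[ℚ,c₁,c₂]) = x • 1 + y • qI c₁ c₂ + z • qJ c₁ c₂ + w • qK c₁ c₂ := by
  ext <;> simp [qI, qJ, qK]

lemma mul_qI (x y z w : ℚ) :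
    (⟨x,y,z,w⟩ : ℍ[ℚ,c₁,c₂]) * qI c₁ c₂ = ⟨c₁*y, x, -(c₁*w), -z⟩ := by
  ext <;> simp [qI] <;> ring
lemma mul_qJ (x y z w : ℚ) :
    (⟨x,y,z,w⟩ : ℍ[ℚ,c₁,c₂]) * qJ c₁ c₂ = ⟨c₂*z, c₂*w, x, y⟩ := by
  ext <;> simp [qJ] <;> ring
lemma mul_qK (x y z w : ℚ) :
    (⟨x,y,z,w⟩ : ℍ[ℚ,c₁,c₂]) * qK c₁ c₂ = ⟨-(c₁*c₂*w), -(c₂*z), c₁*y, x⟩ := by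
  ext <;> simp [qK] <;> ring
lemma qI_mul (x y z w : ℚ) :
    qI c₁ c₂ * (⟨x,y,z,w⟩ : ℍ[ℚ,c₁,c₂]) = ⟨c₁*y, x, c₁*w, z⟩ := by
  ext <;> simp [qI] <;> ring
lemma qJ_mul (x y z w : ℚ) :
    qJ c₁ c₂ * (⟨x,y,z,w⟩ : ℍ[ℚ,c₁,c₂]) = ⟨c₂*z, -(c₂*w), x, -y⟩ := by
  ext <;> simp [qJ] <;> ring
lemma qK_mul (x y z w : ℚ) :
    qK c₁ c₂ * (⟨x,y,z,w⟩ : ℍ[ℚ,c₁,c₂]) = ⟨-(c₁*c₂*w), c₂*z, -(c₁*y), x⟩ := by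
  ext <;> simp [qK] <;> ring
lemma mk_mul_one (x y z w : ℚ) :
    (⟨x,y,z,w⟩ : ℍ[ℚ,c₁,c₂]) * 1 = ⟨x,y,z,w⟩ := mul_one _
lemma one_mul_mk (x y z w : ℚ) :
    (1 : ℍ[ℚ,c₁,c₂]) * ⟨x,y,z,w⟩ = ⟨x,y,z,w⟩ := one_mul _

/-- `4 c₁ c₂` times the idempotent `e₋`. -/
def E : ℍ[ℚ,c₁,c₂] ⊗[ℚ] ℍ[ℚ,c₁,c₂] :=
  (c₁*c₂) • ((1:ℍ[ℚ,c₁,c₂]) ⊗ₜ[ℚ] 1) - c₂ • (qI c₁ c₂ ⊗ₜ[ℚ] qI c₁ c₂)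
    - c₁ • (qJ c₁ c₂ ⊗ₜ[ℚ] qJ c₁ c₂) + (qK c₁ c₂ ⊗ₜ[ℚ] qK c₁ c₂)

lemma L1 (b : ℍ[ℚ,c₁,c₂]) :
    (b ⊗ₜ[ℚ] b) * E c₁ c₂ = ((star b * b).re) • E c₁ c₂ := by
  obtain ⟨x,y,z,w⟩ := b
  simp only [E, mul_sub, mul_add, mul_smul_comm, Algebra.TensorProduct.tmul_mul_tmul,
    mul_qI, mul_qJ, mul_qK, mk_mul_one, QuaternionAlgebra.star_mk,
    QuaternionAlgebra.re_mul, smul_sub, smul_add, smul_smul]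
  simp only [mk_decomp]
  simp only [TensorProduct.add_tmul, TensorProduct.tmul_add, TensorProduct.tmul_smul,
    ← TensorProduct.smul_tmul', smul_smul]
  module

lemma L2 (b : ℍ[ℚ,c₁,c₂]) :
    E c₁ c₂ * (b ⊗ₜ[ℚ] b) = ((star b * b).re) • E c₁ c₂ := by
  obtain ⟨x,y,z,w⟩ := b
  simp only [E, sub_mul, add_mul, smul_mul_assoc, Algebra.TensorProduct.tmul_mul_tmul,
    qI_mul, qJ_mul, qK_mul, one_mul_mk, QuaternionAlgebra.star_mk,
    QuaternionAlgebra.re_mul, smul_sub, smul_add, smul_smul]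
  simp only [mk_decomp]
  simp only [TensorProduct.add_tmul, TensorProduct.tmul_add, TensorProduct.tmul_smul,
    ← TensorProduct.smul_tmul', smul_smul]
  module

lemma E_mem : E c₁ c₂ ∈ symSq c₁ c₂ := by
  have h : ∀ b : ℍ[ℚ,c₁,c₂], b ⊗ₜ[ℚ] b ∈ symSq c₁ c₂ := fun b =>
    Submodule.subset_span ⟨b, rfl⟩
  exact add_mem (sub_mem (sub_mem (Submodule.smul_mem _ _ (h 1)) (Submodule.smul_mem _ _ (h _)))
    (Submodule.smul_mem _ _ (h _))) (h _)

variable (χ : (ℍ[ℚ,c₁,c₂] ⊗[ℚ] ℍ[ℚ,c₁,c₂]) →ₗ[ℚ] ℚ)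
variable (hχ : ∀ b₁ b₂ : ℍ[ℚ,c₁,c₂], χ (b₁ ⊗ₜ[ℚ] b₂) = (star b₁ * b₂).re)

include hχ in
lemma left_eig : ∀ s ∈ symSq c₁ c₂, s * E c₁ c₂ = χ s • E c₁ c₂ := by
  intro s hs
  induction hs using Submodule.span_induction with
  | mem x hx => obtain ⟨b, rfl⟩ := hx; rw [L1, hχ]
  | zero => simp
  | add a b _ _ ha hb => rw [add_mul, ha, hb, map_add, add_smul]
  | smul r a _ ha => rw [smul_mul_assoc, ha, map_smul, smul_smul, smul_eq_mul]

include hχ in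
lemma right_eig : ∀ s ∈ symSq c₁ c₂, E c₁ c₂ * s = χ s • E c₁ c₂ := by
  intro s hs
  induction hs using Submodule.span_induction with
  | mem x hx => obtain ⟨b, rfl⟩ := hx; rw [L2, hχ]
  | zero => simp
  | add a b _ _ ha hb => rw [mul_add, ha, hb, map_add, add_smul]
  | smul r a _ ha => rw [mul_smul_comm, ha, map_smul, smul_smul, smul_eq_mul]

include hχ in
lemma chi_E : χ (E c₁ c₂) = 4 * c₁ * c₂ := by
  simp only [E, map_add, map_sub, map_smul, hχ]
  simp only [qI, qJ, qK, QuaternionAlgebra.star_mk, QuaternionAlgebra.re_mul,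
    star_one, one_mul, QuaternionAlgebra.re_one, QuaternionAlgebra.imI_one,
    QuaternionAlgebra.imJ_one, QuaternionAlgebra.imK_one, smul_eq_mul]
  ring

end

end EMinusAux

/-- Let `B = ℍ[ℚ,c₁,c₂]` (`c₁ c₂ ≠ 0`) be a quaternion algebra over `ℚ` and let
`χ : ∨²B → ℚ` be the algebra homomorphism with `χ(b ⊗ b) = Nr(b)` (given here as the
restriction of the linear functional `b₁ ⊗ b₂ ↦ Tr(b₁^ι b₂)/2 = (star b₁ * b₂).re`).
There exists a unique (nonzero) idempotent `e₋ ∈ ∨²B` such that `s · e₋ = χ(s) · e₋`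
for all `s ∈ ∨²B`. -/
theorem exists_unique_idempotent_eMinus (c₁ c₂ : ℚ) (h₁ : c₁ ≠ 0) (h₂ : c₂ ≠ 0)
    (χ : (ℍ[ℚ,c₁,c₂] ⊗[ℚ] ℍ[ℚ,c₁,c₂]) →ₗ[ℚ] ℚ)
    (hχ : ∀ b₁ b₂ : ℍ[ℚ,c₁,c₂], χ (b₁ ⊗ₜ[ℚ] b₂) = (star b₁ * b₂).re) :
    ∃! e : ℍ[ℚ,c₁,c₂] ⊗[ℚ] ℍ[ℚ,c₁,c₂],
      e ∈ symSq c₁ c₂ ∧ e ≠ 0 ∧ e * e = e ∧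
        ∀ s ∈ symSq c₁ c₂, s * e = χ s • e := by
  classical
  set E := EMinusAux.E c₁ c₂ with hE
  set e : ℍ[ℚ,c₁,c₂] ⊗[ℚ] ℍ[ℚ,c₁,c₂] := (4*c₁*c₂)⁻¹ • E with he
  have hc : (4*c₁*c₂ : ℚ) ≠ 0 := mul_ne_zero (mul_ne_zero (by norm_num) h₁) h₂
  have hmem : e ∈ symSq c₁ c₂ := Submodule.smul_mem _ _ (EMinusAux.E_mem c₁ c₂)
  have hχe : χ e = 1 := by
    rw [he, map_smul, EMinusAux.chi_E c₁ c₂ χ hχ, smul_eq_mul]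
    field_simp
  have hne : e ≠ 0 := by
    intro h
    rw [h, map_zero] at hχe
    exact one_ne_zero hχe.symm
  have heigL : ∀ s ∈ symSq c₁ c₂, s * e = χ s • e := by
    intro s hs
    rw [he, mul_smul_comm, EMinusAux.left_eig c₁ c₂ χ hχ s hs, smul_comm]
  have heigR : ∀ s ∈ symSq c₁ c₂, e * s = χ s • e := by
    intro s hs
    rw [he, smul_mul_assoc, EMinusAux.right_eig c₁ c₂ χ hχ s hs, smul_comm]
  have hidem : e * e = e := by
    rw [heigL e hmem, hχe, one_smul]
  refine ⟨e, ⟨hmem, hne, hidem, heigL⟩, ?_⟩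
  rintro e' ⟨hmem', hne', hidem', heig'⟩
  have hχe' : χ e' = 1 := by
    have h1 : e' * e' = χ e' • e' := heig' e' hmem'
    rw [hidem'] at h1
    by_contra hne1
    have : (χ e' - 1) • e' = 0 := by rw [sub_smul, one_smul, ← h1, sub_self]
    rcases smul_eq_zero.mp this with h | h
    · exact hne1 (by linarith [sub_eq_zero.mp h])
    · exact hne' h
  have h1 : e * e' = e' := by rw [heig' e hmem, hχe, one_smul]
  have h2 : e * e' = e := by rw [heigR e' hmem', hχe', one_smul]
  rw [← h1, h2]
end

section
/- Let B be a quaternion algebra over ℚ, viewed as a left representation of B^× by left multiplication, and let B₀ ⊂ B^ι be the trace-zero elements with B^× acting by b·x = b x b^ι. Then there is an isomorphism of B^×-representations ∧²B ≅ ℚ(-1)³ ⊕ B₀, where ℚ(-1) denotes the one-dimensional representation on which b acts by Nr(b), and B^× acts on ∧²B via the diagonal action b·(x∧y) = (bx)∧(by). -/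
open scoped Quaternion

/-- The `n`-th exterior power `∧ⁿ M`, realized as the `n`-th power of the image of
`M` inside the exterior algebra. -/
noncomputable def extGrade (k M : Type*) [CommRing k] [AddCommGroup M] [Module k M]
    (n : ℕ) : Submodule k (ExteriorAlgebra k M) :=
  (LinearMap.range (ExteriorAlgebra.ι k : M →ₗ[k] ExteriorAlgebra k M)) ^ n

/-- The subspace `B₀ = ker Tr` of trace-zero quaternions. -/
def traceZero (c₁ c₂ : ℚ) : Submodule ℚ ℍ[ℚ,c₁,c₂] where
  carrier := {x | x.re = 0}
  add_mem' := by
    intro a b ha hb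
    simp only [Set.mem_setOf_eq] at *
    simp [ha, hb]
  zero_mem' := by simp
  smul_mem' := by
    intro c x hx
    simp only [Set.mem_setOf_eq] at *
    simp [hx]

open ExteriorAlgebra

variable (c₁ c₂ : ℚ)

abbrev T := (Fin 3 → ℚ) × ↥(traceZero c₁ c₂)

def qI : ℍ[ℚ,c₁,c₂] := ⟨0,1,0,0⟩
def qJ : ℍ[ℚ,c₁,c₂] := ⟨0,0,1,0⟩
def qK : ℍ[ℚ,c₁,c₂] := ⟨0,0,0,1⟩

lemma psi_mem (x y : ℍ[ℚ,c₁,c₂]) : x * star y - y * star x ∈ traceZero c₁ c₂ := by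
  show (x * star y - y * star x).re = 0
  simp [QuaternionAlgebra.re_mul]
  ring

def coordsFn (q : ℍ[ℚ,c₁,c₂]) : Fin 3 → ℚ := ![q.imI, q.imJ, q.imK]

lemma coordsFn_add (q r : ℍ[ℚ,c₁,c₂]) : coordsFn c₁ c₂ (q + r) = coordsFn c₁ c₂ q + coordsFn c₁ c₂ r := by
  funext idx; fin_cases idx <;> simp [coordsFn]

lemma coordsFn_smul (r : ℚ) (q : ℍ[ℚ,c₁,c₂]) : coordsFn c₁ c₂ (r • q) = r • coordsFn c₁ c₂ q := by
  funext idx; fin_cases idx <;> simp [coordsFn]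

noncomputable def mAux : ℍ[ℚ,c₁,c₂] →ₗ[ℚ] ℍ[ℚ,c₁,c₂] →ₗ[ℚ] T c₁ c₂ :=
  LinearMap.mk₂ ℚ
    (fun x y => (coordsFn c₁ c₂ (star x * y - star y * x),
        ⟨x * star y - y * star x, psi_mem c₁ c₂ x y⟩))
    (by intro a b y
        refine Prod.ext ?_ (Subtype.ext ?_)
        · show coordsFn c₁ c₂ _ = _
          rw [show star (a+b) * y - star y * (a+b) = (star a * y - star y * a) + (star b * y - star y * b) by
            simp [star_add, add_mul, mul_add]; abel]
          exact coordsFn_add c₁ c₂ _ _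
        · show (a+b) * star y - y * star (a+b) = _
          simp [star_add, add_mul, mul_add]; abel)
    (by intro r a y
        refine Prod.ext ?_ (Subtype.ext ?_)
        · show coordsFn c₁ c₂ _ = _
          rw [show star (r • a) * y - star y * (r • a) = r • (star a * y - star y * a) by
            simp [star_smul, smul_sub, smul_mul_assoc, mul_smul_comm]]
          exact coordsFn_smul c₁ c₂ _ _
        · show (r • a) * star y - y * star (r • a) = _
          simp [star_smul, smul_sub, smul_mul_assoc, mul_smul_comm])
    (by intro y a b
        refine Prod.ext ?_ (Subtype.ext ?_)
        · show coordsFn c₁ c₂ _ = _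
          rw [show star y * (a+b) - star (a+b) * y = (star y * a - star a * y) + (star y * b - star b * y) by
            simp [star_add, add_mul, mul_add]; abel]
          exact coordsFn_add c₁ c₂ _ _
        · show y * star (a+b) - (a+b) * star y = _
          simp [star_add, add_mul, mul_add]; abel)
    (by intro r y a
        refine Prod.ext ?_ (Subtype.ext ?_)
        · show coordsFn c₁ c₂ _ = _
          rw [show star y * (r • a) - star (r • a) * y = r • (star y * a - star a * y) by
            simp [star_smul, smul_sub, smul_mul_assoc, mul_smul_comm]]
          exact coordsFn_smul c₁ c₂ _ _
        · show y * star (r • a) - (r • a) * star y = _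
          simp [star_smul, smul_sub, smul_mul_assoc, mul_smul_comm])

lemma mAux_self (x : ℍ[ℚ,c₁,c₂]) : mAux c₁ c₂ x x = 0 := by
  simp [mAux, coordsFn]

noncomputable def Aalt : ℍ[ℚ,c₁,c₂] [⋀^Fin 2]→ₗ[ℚ] T c₁ c₂ where
  toFun v := mAux c₁ c₂ (v 0) (v 1)
  map_update_add' := by
    intro _ v i x y
    fin_cases i <;>
      simp [Function.update_self, Function.update_of_ne]
  map_update_smul' := by
    intro _ v i r x
    fin_cases i <;>
      simp [Function.update_self, Function.update_of_ne]
  map_eq_zero_of_eq' := by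
    intro v i j hv hij
    fin_cases i <;> fin_cases j
    · exact absurd rfl hij
    · show mAux c₁ c₂ (v 0) (v 1) = 0
      rw [show v 0 = v 1 from hv]
      exact mAux_self c₁ c₂ _
    · show mAux c₁ c₂ (v 0) (v 1) = 0
      rw [show v 0 = v 1 from hv.symm]
      exact mAux_self c₁ c₂ _
    · exact absurd rfl hij

noncomputable def famF : ∀ n : ℕ, ℍ[ℚ,c₁,c₂] [⋀^Fin n]→ₗ[ℚ] T c₁ c₂
  | 2 => Aalt c₁ c₂
  | _ => 0

noncomputable def Fmap : ExteriorAlgebra ℚ ℍ[ℚ,c₁,c₂] →ₗ[ℚ] T c₁ c₂ :=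
  ExteriorAlgebra.liftAlternating (famF c₁ c₂)

lemma Fmap_wedge (x y : ℍ[ℚ,c₁,c₂]) :
    Fmap c₁ c₂ (ι ℚ x * ι ℚ y) = mAux c₁ c₂ x y := by
  rw [Fmap, ExteriorAlgebra.liftAlternating_ι_mul, ExteriorAlgebra.liftAlternating_ι]
  show (famF c₁ c₂ 2).curryLeft x ![y] = _
  simp [AlternatingMap.curryLeft, famF, Aalt]

noncomputable def Eel (u v : ℍ[ℚ,c₁,c₂]) : ExteriorAlgebra ℚ ℍ[ℚ,c₁,c₂] := ι ℚ u * ι ℚ v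

lemma wedge_swap (x y : ℍ[ℚ,c₁,c₂]) : ι ℚ y * ι ℚ x = -(ι ℚ x * ι ℚ y) :=
  eq_neg_of_add_eq_zero_right (ExteriorAlgebra.ι_add_mul_swap x y)

noncomputable def U1 : ExteriorAlgebra ℚ ℍ[ℚ,c₁,c₂] :=
  (4:ℚ)⁻¹ • Eel c₁ c₂ 1 (qI c₁ c₂) + (4*c₂)⁻¹ • Eel c₁ c₂ (qJ c₁ c₂) (qK c₁ c₂)
noncomputable def U2 : ExteriorAlgebra ℚ ℍ[ℚ,c₁,c₂] :=
  (4:ℚ)⁻¹ • Eel c₁ c₂ 1 (qJ c₁ c₂) - (4*c₁)⁻¹ • Eel c₁ c₂ (qI c₁ c₂) (qK c₁ c₂)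
noncomputable def U3 : ExteriorAlgebra ℚ ℍ[ℚ,c₁,c₂] :=
  (4:ℚ)⁻¹ • Eel c₁ c₂ 1 (qK c₁ c₂) - (4:ℚ)⁻¹ • Eel c₁ c₂ (qI c₁ c₂) (qJ c₁ c₂)
noncomputable def W1 : ExteriorAlgebra ℚ ℍ[ℚ,c₁,c₂] :=
  -((4:ℚ)⁻¹ • Eel c₁ c₂ 1 (qI c₁ c₂)) + (4*c₂)⁻¹ • Eel c₁ c₂ (qJ c₁ c₂) (qK c₁ c₂)
noncomputable def W2 : ExteriorAlgebra ℚ ℍ[ℚ,c₁,c₂] :=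
  -((4:ℚ)⁻¹ • Eel c₁ c₂ 1 (qJ c₁ c₂)) - (4*c₁)⁻¹ • Eel c₁ c₂ (qI c₁ c₂) (qK c₁ c₂)
noncomputable def W3 : ExteriorAlgebra ℚ ℍ[ℚ,c₁,c₂] :=
  -((4:ℚ)⁻¹ • Eel c₁ c₂ 1 (qK c₁ c₂)) - (4:ℚ)⁻¹ • Eel c₁ c₂ (qI c₁ c₂) (qJ c₁ c₂)

noncomputable def Gmap : T c₁ c₂ →ₗ[ℚ] ExteriorAlgebra ℚ ℍ[ℚ,c₁,c₂] where
  toFun p := p.1 0 • U1 c₁ c₂ + p.1 1 • U2 c₁ c₂ + p.1 2 • U3 c₁ c₂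
    + (p.2 : ℍ[ℚ,c₁,c₂]).imI • W1 c₁ c₂ + (p.2 : ℍ[ℚ,c₁,c₂]).imJ • W2 c₁ c₂
    + (p.2 : ℍ[ℚ,c₁,c₂]).imK • W3 c₁ c₂
  map_add' p q := by
    simp only [Prod.fst_add, Prod.snd_add, Pi.add_apply, Submodule.coe_add,
      QuaternionAlgebra.imI_add, QuaternionAlgebra.imJ_add, QuaternionAlgebra.imK_add]
    module
  map_smul' r p := by
    simp only [Prod.smul_fst, Prod.smul_snd, Pi.smul_apply, SetLike.val_smul,
      QuaternionAlgebra.imI_smul, QuaternionAlgebra.imJ_smul, QuaternionAlgebra.imK_smul,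
      smul_eq_mul, RingHom.id_apply]
    module

lemma quat_decomp (x : ℍ[ℚ,c₁,c₂]) :
    x = x.re • 1 + x.imI • qI c₁ c₂ + x.imJ • qJ c₁ c₂ + x.imK • qK c₁ c₂ := by
  ext <;> simp [qI, qJ, qK]

lemma Gmap_mAux (h₁ : c₁ ≠ 0) (h₂ : c₂ ≠ 0) (x y : ℍ[ℚ,c₁,c₂]) :
    Gmap c₁ c₂ (mAux c₁ c₂ x y) = ι ℚ x * ι ℚ y := by
  conv_rhs => rw [quat_decomp c₁ c₂ x, quat_decomp c₁ c₂ y]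
  simp only [map_add, map_smul, add_mul, mul_add, smul_mul_assoc, mul_smul_comm,
    ExteriorAlgebra.ι_sq_zero, smul_zero,
    wedge_swap c₁ c₂ (1 : ℍ[ℚ,c₁,c₂]) (qI c₁ c₂),
    wedge_swap c₁ c₂ (1 : ℍ[ℚ,c₁,c₂]) (qJ c₁ c₂),
    wedge_swap c₁ c₂ (1 : ℍ[ℚ,c₁,c₂]) (qK c₁ c₂),
    wedge_swap c₁ c₂ (qI c₁ c₂) (qJ c₁ c₂),
    wedge_swap c₁ c₂ (qI c₁ c₂) (qK c₁ c₂),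
    wedge_swap c₁ c₂ (qJ c₁ c₂) (qK c₁ c₂)]
  show (mAux c₁ c₂ x y).1 0 • U1 c₁ c₂ + (mAux c₁ c₂ x y).1 1 • U2 c₁ c₂
      + (mAux c₁ c₂ x y).1 2 • U3 c₁ c₂ + ((mAux c₁ c₂ x y).2 : ℍ[ℚ,c₁,c₂]).imI • W1 c₁ c₂
      + ((mAux c₁ c₂ x y).2 : ℍ[ℚ,c₁,c₂]).imJ • W2 c₁ c₂
      + ((mAux c₁ c₂ x y).2 : ℍ[ℚ,c₁,c₂]).imK • W3 c₁ c₂ = _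
  simp only [mAux, LinearMap.mk₂_apply, coordsFn, Matrix.cons_val_zero, Matrix.cons_val_one,
    Matrix.head_cons, Matrix.cons_val_two, Matrix.tail_cons,
    QuaternionAlgebra.imI_sub, QuaternionAlgebra.imJ_sub, QuaternionAlgebra.imK_sub,
    QuaternionAlgebra.imI_mul, QuaternionAlgebra.imJ_mul, QuaternionAlgebra.imK_mul,
    QuaternionAlgebra.re_star, QuaternionAlgebra.imI_star, QuaternionAlgebra.imJ_star,
    QuaternionAlgebra.imK_star, U1, U2, U3, W1, W2, W3, Eel, qI, qJ, qK]
  match_scalars <;> field_simp <;> ring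

lemma Fmap_Eel (u v : ℍ[ℚ,c₁,c₂]) : Fmap c₁ c₂ (Eel c₁ c₂ u v) = mAux c₁ c₂ u v :=
  Fmap_wedge c₁ c₂ u v

@[simp] lemma qI_re : (qI c₁ c₂).re = 0 := rfl
@[simp] lemma qI_imI : (qI c₁ c₂).imI = 1 := rfl
@[simp] lemma qI_imJ : (qI c₁ c₂).imJ = 0 := rfl
@[simp] lemma qI_imK : (qI c₁ c₂).imK = 0 := rfl
@[simp] lemma qJ_re : (qJ c₁ c₂).re = 0 := rfl
@[simp] lemma qJ_imI : (qJ c₁ c₂).imI = 0 := rfl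
@[simp] lemma qJ_imJ : (qJ c₁ c₂).imJ = 1 := rfl
@[simp] lemma qJ_imK : (qJ c₁ c₂).imK = 0 := rfl
@[simp] lemma qK_re : (qK c₁ c₂).re = 0 := rfl
@[simp] lemma qK_imI : (qK c₁ c₂).imI = 0 := rfl
@[simp] lemma qK_imJ : (qK c₁ c₂).imJ = 0 := rfl
@[simp] lemma qK_imK : (qK c₁ c₂).imK = 1 := rfl

set_option maxHeartbeats 1000000 in
lemma Fmap_Gmap (h₁ : c₁ ≠ 0) (h₂ : c₂ ≠ 0) (p : T c₁ c₂) :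
    Fmap c₁ c₂ (Gmap c₁ c₂ p) = p := by
  obtain ⟨v, q⟩ := p
  have hq : (q : ℍ[ℚ,c₁,c₂]).re = 0 := q.2
  show Fmap c₁ c₂ (v 0 • U1 c₁ c₂ + v 1 • U2 c₁ c₂ + v 2 • U3 c₁ c₂
    + (q : ℍ[ℚ,c₁,c₂]).imI • W1 c₁ c₂ + (q : ℍ[ℚ,c₁,c₂]).imJ • W2 c₁ c₂
    + (q : ℍ[ℚ,c₁,c₂]).imK • W3 c₁ c₂) = (v, q)
  simp only [U1, U2, U3, W1, W2, W3, map_add, map_smul, map_sub, map_neg, smul_add, smul_sub,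
    smul_neg, Fmap_Eel]
  simp only [mAux, LinearMap.mk₂_apply]
  refine Prod.ext ?_ (Subtype.ext ?_)
  · show _ = v
    funext idx
    fin_cases idx <;>
      simp only [Prod.fst_add, Prod.fst_sub, Prod.fst_neg, Prod.smul_fst, Pi.add_apply,
        Pi.sub_apply, Pi.neg_apply, Pi.smul_apply, coordsFn, Matrix.cons_val_zero,
        Matrix.cons_val_one, Matrix.head_cons, Matrix.cons_val_two, Matrix.tail_cons,
        QuaternionAlgebra.imI_sub, QuaternionAlgebra.imJ_sub, QuaternionAlgebra.imK_sub,
        QuaternionAlgebra.imI_mul, QuaternionAlgebra.imJ_mul, QuaternionAlgebra.imK_mul,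
        QuaternionAlgebra.re_star, QuaternionAlgebra.imI_star, QuaternionAlgebra.imJ_star,
        QuaternionAlgebra.imK_star, QuaternionAlgebra.re_one, QuaternionAlgebra.imI_one,
        QuaternionAlgebra.imJ_one, QuaternionAlgebra.imK_one, qI_re, qI_imI, qI_imJ, qI_imK,
        qJ_re, qJ_imI, qJ_imJ, qJ_imK, qK_re, qK_imI, qK_imJ, qK_imK, smul_eq_mul, Matrix.cons_val] <;>
      (try rw [show (⟨2, by norm_num⟩ : Fin 3) = 2 from rfl]) <;>
      field_simp <;> (try simp only [Fin.zero_eta, Fin.mk_one, Matrix.cons_val_zero, Matrix.cons_val_one,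
        Matrix.cons_val_two, Matrix.head_cons, Matrix.tail_cons, Matrix.cons_val]) <;> try ring
  · show _ = (q : ℍ[ℚ,c₁,c₂])
    have coe2 : ∀ (a b : T c₁ c₂), ((a + b).2 : ℍ[ℚ,c₁,c₂]) = (a.2 : ℍ[ℚ,c₁,c₂]) + (b.2 : ℍ[ℚ,c₁,c₂]) := fun a b => rfl
    have coe3 : ∀ (r : ℚ) (a : T c₁ c₂), ((r • a).2 : ℍ[ℚ,c₁,c₂]) = r • (a.2 : ℍ[ℚ,c₁,c₂]) := fun r a => rfl
    have coe4 : ∀ (a b : T c₁ c₂), ((a - b).2 : ℍ[ℚ,c₁,c₂]) = (a.2 : ℍ[ℚ,c₁,c₂]) - (b.2 : ℍ[ℚ,c₁,c₂]) := fun a b => rfl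
    have coe5 : ∀ (a : T c₁ c₂), ((-a).2 : ℍ[ℚ,c₁,c₂]) = -(a.2 : ℍ[ℚ,c₁,c₂]) := fun a => rfl
    simp only [coe2, coe3, coe4, coe5]
    ext <;>
      simp only [QuaternionAlgebra.re_add, QuaternionAlgebra.imI_add, QuaternionAlgebra.imJ_add,
        QuaternionAlgebra.imK_add, QuaternionAlgebra.re_sub, QuaternionAlgebra.imI_sub,
        QuaternionAlgebra.imJ_sub, QuaternionAlgebra.imK_sub, QuaternionAlgebra.re_neg,
        QuaternionAlgebra.imI_neg, QuaternionAlgebra.imJ_neg, QuaternionAlgebra.imK_neg,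
        QuaternionAlgebra.re_smul, QuaternionAlgebra.imI_smul, QuaternionAlgebra.imJ_smul,
        QuaternionAlgebra.imK_smul, QuaternionAlgebra.re_mul, QuaternionAlgebra.imI_mul,
        QuaternionAlgebra.imJ_mul, QuaternionAlgebra.imK_mul,
        QuaternionAlgebra.re_star, QuaternionAlgebra.imI_star, QuaternionAlgebra.imJ_star,
        QuaternionAlgebra.imK_star, QuaternionAlgebra.re_one, QuaternionAlgebra.imI_one,
        QuaternionAlgebra.imJ_one, QuaternionAlgebra.imK_one, qI_re, qI_imI, qI_imJ, qI_imK,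
        qJ_re, qJ_imI, qJ_imJ, qJ_imK, qK_re, qK_imI, qK_imJ, qK_imK, smul_eq_mul, hq] <;>
      field_simp <;> ring

lemma wedge_mem (x y : ℍ[ℚ,c₁,c₂]) : ι ℚ x * ι ℚ y ∈ extGrade ℚ ℍ[ℚ,c₁,c₂] 2 := by
  rw [extGrade, pow_two]
  exact Submodule.mul_mem_mul (LinearMap.mem_range_self _ x) (LinearMap.mem_range_self _ y)

lemma Eel_mem (u v : ℍ[ℚ,c₁,c₂]) : Eel c₁ c₂ u v ∈ extGrade ℚ ℍ[ℚ,c₁,c₂] 2 :=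
  wedge_mem c₁ c₂ u v

lemma Gmap_mem (p : T c₁ c₂) : Gmap c₁ c₂ p ∈ extGrade ℚ ℍ[ℚ,c₁,c₂] 2 := by
  have hU1 : U1 c₁ c₂ ∈ extGrade ℚ ℍ[ℚ,c₁,c₂] 2 :=
    add_mem (Submodule.smul_mem _ _ (Eel_mem _ _ _ _)) (Submodule.smul_mem _ _ (Eel_mem _ _ _ _))
  have hU2 : U2 c₁ c₂ ∈ extGrade ℚ ℍ[ℚ,c₁,c₂] 2 :=
    sub_mem (Submodule.smul_mem _ _ (Eel_mem _ _ _ _)) (Submodule.smul_mem _ _ (Eel_mem _ _ _ _))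
  have hU3 : U3 c₁ c₂ ∈ extGrade ℚ ℍ[ℚ,c₁,c₂] 2 :=
    sub_mem (Submodule.smul_mem _ _ (Eel_mem _ _ _ _)) (Submodule.smul_mem _ _ (Eel_mem _ _ _ _))
  have hW1 : W1 c₁ c₂ ∈ extGrade ℚ ℍ[ℚ,c₁,c₂] 2 :=
    add_mem (neg_mem (Submodule.smul_mem _ _ (Eel_mem _ _ _ _)))
      (Submodule.smul_mem _ _ (Eel_mem _ _ _ _))
  have hW2 : W2 c₁ c₂ ∈ extGrade ℚ ℍ[ℚ,c₁,c₂] 2 :=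
    sub_mem (neg_mem (Submodule.smul_mem _ _ (Eel_mem _ _ _ _)))
      (Submodule.smul_mem _ _ (Eel_mem _ _ _ _))
  have hW3 : W3 c₁ c₂ ∈ extGrade ℚ ℍ[ℚ,c₁,c₂] 2 :=
    sub_mem (neg_mem (Submodule.smul_mem _ _ (Eel_mem _ _ _ _)))
      (Submodule.smul_mem _ _ (Eel_mem _ _ _ _))
  show p.1 0 • U1 c₁ c₂ + p.1 1 • U2 c₁ c₂ + p.1 2 • U3 c₁ c₂
    + (p.2 : ℍ[ℚ,c₁,c₂]).imI • W1 c₁ c₂ + (p.2 : ℍ[ℚ,c₁,c₂]).imJ • W2 c₁ c₂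
    + (p.2 : ℍ[ℚ,c₁,c₂]).imK • W3 c₁ c₂ ∈ _
  exact add_mem (add_mem (add_mem (add_mem (add_mem (Submodule.smul_mem _ _ hU1)
    (Submodule.smul_mem _ _ hU2)) (Submodule.smul_mem _ _ hU3)) (Submodule.smul_mem _ _ hW1))
    (Submodule.smul_mem _ _ hW2)) (Submodule.smul_mem _ _ hW3)

lemma Gmap_Fmap (h₁ : c₁ ≠ 0) (h₂ : c₂ ≠ 0) :
    ∀ z ∈ extGrade ℚ ℍ[ℚ,c₁,c₂] 2, Gmap c₁ c₂ (Fmap c₁ c₂ z) = z := by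
  intro z hz
  rw [extGrade, pow_two] at hz
  refine Submodule.mul_induction_on hz ?_ ?_
  · rintro a ⟨x, rfl⟩ b ⟨y, rfl⟩
    rw [Fmap_wedge, Gmap_mAux c₁ c₂ h₁ h₂]
  · intro a b ha hb
    rw [map_add, map_add, ha, hb]

set_option maxHeartbeats 2000000 in
lemma equivar (b : ℍ[ℚ,c₁,c₂]) :
    ∀ z ∈ extGrade ℚ ℍ[ℚ,c₁,c₂] 2,
      (Fmap c₁ c₂ ((ExteriorAlgebra.map (LinearMap.mulLeft ℚ b)) z)).1
          = ((b * star b).re) • (Fmap c₁ c₂ z).1 ∧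
        ((Fmap c₁ c₂ ((ExteriorAlgebra.map (LinearMap.mulLeft ℚ b)) z)).2 : ℍ[ℚ,c₁,c₂])
          = b * ((Fmap c₁ c₂ z).2 : ℍ[ℚ,c₁,c₂]) * star b := by
  intro z hz
  rw [extGrade, pow_two] at hz
  refine Submodule.mul_induction_on hz ?_ ?_
  · rintro u ⟨x, rfl⟩ w ⟨y, rfl⟩
    rw [map_mul, ExteriorAlgebra.map_apply_ι, ExteriorAlgebra.map_apply_ι,
      LinearMap.mulLeft_apply, LinearMap.mulLeft_apply, Fmap_wedge, Fmap_wedge]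
    constructor
    · show coordsFn c₁ c₂ _ = ((b * star b).re) • coordsFn c₁ c₂ _
      rw [show star (b*x) * (b*y) - star (b*y) * (b*x)
          = ((b * star b).re) • (star x * y - star y * x) by
        ext <;>
          simp only [QuaternionAlgebra.re_sub, QuaternionAlgebra.imI_sub,
            QuaternionAlgebra.imJ_sub, QuaternionAlgebra.imK_sub, QuaternionAlgebra.re_smul,
            QuaternionAlgebra.imI_smul, QuaternionAlgebra.imJ_smul, QuaternionAlgebra.imK_smul,
            QuaternionAlgebra.re_mul, QuaternionAlgebra.imI_mul, QuaternionAlgebra.imJ_mul,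
            QuaternionAlgebra.imK_mul, QuaternionAlgebra.re_star, QuaternionAlgebra.imI_star,
            QuaternionAlgebra.imJ_star, QuaternionAlgebra.imK_star, smul_eq_mul] <;> ring]
      exact coordsFn_smul c₁ c₂ _ _
    · show (b * x) * star (b * y) - (b * y) * star (b * x) = _
      rw [show ((mAux c₁ c₂ x y).2 : ℍ[ℚ,c₁,c₂]) = x * star y - y * star x from rfl]
      ext <;>
        simp only [QuaternionAlgebra.re_sub, QuaternionAlgebra.imI_sub, QuaternionAlgebra.imJ_sub,
          QuaternionAlgebra.imK_sub, QuaternionAlgebra.re_mul, QuaternionAlgebra.imI_mul,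
          QuaternionAlgebra.imJ_mul, QuaternionAlgebra.imK_mul, QuaternionAlgebra.re_star,
          QuaternionAlgebra.imI_star, QuaternionAlgebra.imJ_star, QuaternionAlgebra.imK_star] <;>
        ring
  · intro u w hu hw
    have e1 : Fmap c₁ c₂ ((ExteriorAlgebra.map (LinearMap.mulLeft ℚ b)) (u + w))
        = Fmap c₁ c₂ ((ExteriorAlgebra.map (LinearMap.mulLeft ℚ b)) u)
          + Fmap c₁ c₂ ((ExteriorAlgebra.map (LinearMap.mulLeft ℚ b)) w) := by
      rw [map_add, map_add]
    have e2 : Fmap c₁ c₂ (u + w) = Fmap c₁ c₂ u + Fmap c₁ c₂ w := map_add _ _ _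
    constructor
    · rw [e1, e2, Prod.fst_add, Prod.fst_add, hu.1, hw.1, smul_add]
    · rw [e1, e2, Prod.snd_add, Prod.snd_add, Submodule.coe_add, Submodule.coe_add,
        hu.2, hw.2, mul_add, add_mul]


/-- Let `B = ℍ[ℚ,c₁,c₂]` (`c₁ c₂ ≠ 0`), viewed as a representation of `B^×` by left
multiplication.  Then there is an isomorphism of `B^×`-representations
`∧²B ≅ ℚ(-1)³ ⊕ B₀`: a linear isomorphism `φ : ∧²B ≃ (ℚ³) × B₀` intertwining, for every
unit `b`, the map `∧²(L_b)` (induced on `∧²B` by left multiplication by `b`) with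
multiplication by `Nr(b) = (b · star b).re` on `ℚ³` and the twisted conjugation
`x ↦ b x b^ι` on the trace-zero part `B₀`. -/
theorem exterior_square_decomposition (c₁ c₂ : ℚ) (h₁ : c₁ ≠ 0) (h₂ : c₂ ≠ 0) :
    ∃ φ : ↥(extGrade ℚ ℍ[ℚ,c₁,c₂] 2) ≃ₗ[ℚ] ((Fin 3 → ℚ) × ↥(traceZero c₁ c₂)),
      ∀ (b : ℍ[ℚ,c₁,c₂]ˣ) (t : ↥(extGrade ℚ ℍ[ℚ,c₁,c₂] 2))
        (h : (ExteriorAlgebra.map (LinearMap.mulLeft ℚ (b : ℍ[ℚ,c₁,c₂])))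
                (t : ExteriorAlgebra ℚ ℍ[ℚ,c₁,c₂]) ∈ extGrade ℚ ℍ[ℚ,c₁,c₂] 2),
        (φ ⟨_, h⟩).1 = (((b : ℍ[ℚ,c₁,c₂]) * star (b : ℍ[ℚ,c₁,c₂])).re) • (φ t).1 ∧
        ((φ ⟨_, h⟩).2 : ℍ[ℚ,c₁,c₂])
          = (b : ℍ[ℚ,c₁,c₂]) * ((φ t).2 : ℍ[ℚ,c₁,c₂]) * star (b : ℍ[ℚ,c₁,c₂]) := by
  refine ⟨LinearEquiv.ofLinear
      ((Fmap c₁ c₂).comp (extGrade ℚ ℍ[ℚ,c₁,c₂] 2).subtype)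
      (LinearMap.codRestrict _ (Gmap c₁ c₂) (Gmap_mem c₁ c₂)) ?_ ?_, ?_⟩
  · apply LinearMap.ext
    intro p
    simpa using Fmap_Gmap c₁ c₂ h₁ h₂ p
  · apply LinearMap.ext
    intro t
    apply Subtype.ext
    simpa using Gmap_Fmap c₁ c₂ h₁ h₂ (t : ExteriorAlgebra ℚ ℍ[ℚ,c₁,c₂]) t.2
  · intro b t h
    have H := equivar c₁ c₂ (b : ℍ[ℚ,c₁,c₂]) (t : ExteriorAlgebra ℚ ℍ[ℚ,c₁,c₂]) t.2
    simp only [LinearEquiv.ofLinear_apply, LinearMap.comp_apply, Submodule.subtype_apply]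
    exact H
end
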